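/- Let G be a finite simple graph, k ≥ 1, and r₁,…,r_k nonnegative integers with ∑ᵢ rᵢ ≥ Δ(G) + 1 − k. If P = (V₁,…,V_k) is a partition of V(G) minimizing f(P) = ∑ᵢ (|E(G[Vᵢ])| − rᵢ|Vᵢ|), then Δ(G[Vᵢ]) ≤ rᵢ for every i. -/

import Mathlib

/-!
Suppose a vertex `v` of the part `Vᵢ` had `dᵢ > rᵢ` neighbours inside `Vᵢ`. Writing `dⱼ` for the
number of neighbours of `v` in `Vⱼ`, we have `∑ⱼ dⱼ = deg v ≤ Δ ≤ ∑ⱼ rⱼ + k - 1`, so some part has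
`dⱼ ≤ rⱼ`. Moving `v` to `Vⱼ` changes `f` by exactly `(dⱼ - rⱼ) - (dᵢ - rᵢ) < 0`, contradicting the
minimality of the partition.
-/

open SimpleGraph

namespace Function

theorem ncard_fiber {V ι : Type*} [DecidableEq ι] [Finite V] (c : V → ι) (v : V) (i : ι) :
    {x | c x = i}.ncard = {x | x ≠ v ∧ c x = i}.ncard + if c v = i then 1 else 0 := by
  split_ifs with hv
  · rw [← Set.ncard_sdiff_singleton_add_one (a := v) hv]
    congr 2
    ext x
    simp only [Set.mem_sdiff, Set.mem_singleton_iff, Set.mem_ofPred_eq]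
    exact and_comm
  · congr 1
    ext x
    exact ⟨fun hx => ⟨by rintro rfl; exact hv hx, hx⟩, And.right⟩

theorem fiber_update_avoiding {V ι : Type*} [DecidableEq V] (c : V → ι) (v : V) (i j : ι) :
    {x | x ≠ v ∧ update c v j x = i} = {x | x ≠ v ∧ c x = i} := by
  ext x
  simp only [Set.mem_ofPred_eq, and_congr_right_iff]
  intro hxv
  rw [update_of_ne hxv]

end Function

namespace SimpleGraph

variable {V ι : Type*} (G : SimpleGraph V)

def partEdgeSet (c : V → ι) (i : ι) : Set (Sym2 V) :=
  {e | e ∈ G.edgeSet ∧ ∀ v ∈ e, c v = i}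

noncomputable def partDegree (c : V → ι) (v : V) (i : ι) : ℕ :=
  {w | G.Adj v w ∧ c w = i}.ncard

noncomputable def partitionCost [Fintype ι] (r : ι → ℕ) (c : V → ι) : ℤ :=
  ∑ i, ((G.partEdgeSet c i).ncard - r i * {v | c v = i}.ncard : ℤ)

variable {G}

theorem partEdgeSet_eq_union {c : V → ι} {v : V} {i : ι} (hv : c v = i) :
    G.partEdgeSet c i =
      {e ∈ G.partEdgeSet c i | v ∉ e} ∪ (fun w => s(v, w)) '' {w | G.Adj v w ∧ c w = i} := by
  ext e
  induction e using Sym2.ind with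
  | _ x y =>
    simp only [partEdgeSet, Set.mem_union, Set.mem_ofPred_eq, Set.mem_image, mem_edgeSet,
      Sym2.mem_iff, forall_eq_or_imp, forall_eq, Sym2.eq_iff]
    constructor
    · rintro ⟨hxy, hx, hy⟩
      by_cases hvx : v = x
      · subst hvx; exact .inr ⟨y, ⟨hxy, hy⟩, .inl ⟨rfl, rfl⟩⟩
      by_cases hvy : v = y
      · subst hvy; exact .inr ⟨x, ⟨hxy.symm, hx⟩, .inr ⟨rfl, rfl⟩⟩
      exact .inl ⟨⟨hxy, hx, hy⟩, by tauto⟩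
    · rintro (⟨h, -⟩ | ⟨w, ⟨hvw, hw⟩, ⟨rfl, rfl⟩ | ⟨rfl, rfl⟩⟩)
      · exact h
      · exact ⟨hvw, hv, hw⟩
      · exact ⟨hvw.symm, hw, hv⟩

theorem ncard_partEdgeSet [DecidableEq ι] [Finite V] (c : V → ι) (v : V) (i : ι) :
    (G.partEdgeSet c i).ncard =
      {e ∈ G.partEdgeSet c i | v ∉ e}.ncard + if c v = i then G.partDegree c v i else 0 := by
  split_ifs with hv
  · conv_lhs => rw [partEdgeSet_eq_union hv]
    rw [Set.ncard_union_eq, Set.ncard_image_of_injective _ fun _ _ => Sym2.congr_right.mp]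
    · rfl
    rw [Set.disjoint_left]
    rintro _ ⟨-, hve⟩ ⟨w, -, rfl⟩
    exact hve (Sym2.mem_mk_left _ _)
  · rw [add_zero]
    congr 1
    ext e
    exact ⟨fun he => ⟨he, fun hve => hv (he.2 v hve)⟩, And.left⟩

section update

variable [DecidableEq V]

theorem partEdgeSet_update_avoiding (c : V → ι) (v : V) (i j : ι) :
    {e ∈ G.partEdgeSet (Function.update c v j) i | v ∉ e} = {e ∈ G.partEdgeSet c i | v ∉ e} := by
  ext e
  have hupd : ∀ x ∈ e, v ∉ e → Function.update c v j x = c x := fun x hx hve =>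
    Function.update_of_ne (by rintro rfl; exact hve hx) _ _
  simp only [partEdgeSet, Set.mem_ofPred_eq]
  constructor
  · rintro ⟨⟨he, hall⟩, hve⟩
    exact ⟨⟨he, fun x hx => (hupd x hx hve).symm.trans (hall x hx)⟩, hve⟩
  · rintro ⟨⟨he, hall⟩, hve⟩
    exact ⟨⟨he, fun x hx => (hupd x hx hve).trans (hall x hx)⟩, hve⟩

theorem partDegree_update (c : V → ι) (v : V) (i j : ι) :
    G.partDegree (Function.update c v j) v i = G.partDegree c v i := by
  unfold partDegree
  congr 1
  ext w
  simp only [Set.mem_ofPred_eq, and_congr_right_iff]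
  intro hvw
  rw [Function.update_of_ne hvw.ne']

theorem partitionCost_update [Fintype ι] [DecidableEq ι] [Finite V] (r : ι → ℕ) (c : V → ι)
    (v : V) (j : ι) :
    G.partitionCost r (Function.update c v j) = G.partitionCost r c +
      ((G.partDegree c v j : ℤ) - r j) - ((G.partDegree c v (c v) : ℤ) - r (c v)) := by
  have hterm : ∀ i,
      (((G.partEdgeSet (Function.update c v j) i).ncard : ℤ) -
        r i * {x | Function.update c v j x = i}.ncard) =
      ((G.partEdgeSet c i).ncard - r i * {x | c x = i}.ncard : ℤ) +
        (if j = i then (G.partDegree c v i : ℤ) - r i else 0) -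
        (if c v = i then (G.partDegree c v i : ℤ) - r i else 0) := by
    intro i
    rw [ncard_partEdgeSet _ v, Function.ncard_fiber _ v, ncard_partEdgeSet c v,
      Function.ncard_fiber c v, partEdgeSet_update_avoiding, Function.fiber_update_avoiding,
      partDegree_update, Function.update_self]
    split_ifs <;> push_cast <;> ring
  simp only [partitionCost, hterm, Finset.sum_add_distrib, Finset.sum_sub_distrib,
    Finset.sum_ite_eq, Finset.mem_univ, if_true]

end update

theorem sum_partDegree [Fintype V] [DecidableRel G.Adj] [Fintype ι] [DecidableEq ι]
    (c : V → ι) (v : V) : ∑ i, G.partDegree c v i = G.degree v := by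
  have hfib : ∀ i, G.partDegree c v i = {w ∈ G.neighborFinset v | c w = i}.card := by
    intro i
    rw [partDegree, ← Set.ncard_coe_finset]
    congr 1
    ext w
    simp
  simp only [hfib]
  rw [← Finset.card_eq_sum_card_fiberwise fun w _ => Finset.mem_univ (c w),
    card_neighborFinset_eq_degree]

theorem exists_partDegree_le [Fintype V] [DecidableRel G.Adj] [Fintype ι] [DecidableEq ι]
    (r : ι → ℕ) (hr : G.maxDegree + 1 ≤ ∑ i, r i + Fintype.card ι) (c : V → ι) (v : V) :
    ∃ j, G.partDegree c v j ≤ r j := by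
  by_contra! hlt
  have hsum : ∑ i, (r i + 1) ≤ ∑ i, G.partDegree c v i := Finset.sum_le_sum fun i _ => hlt i
  rw [sum_partDegree, Finset.sum_add_distrib, Finset.sum_const, Finset.card_univ,
    smul_eq_mul, mul_one] at hsum
  have := G.degree_le_maxDegree v
  omega

theorem ncard_neighborSet_induce_fiber (c : V → ι) {v : V} {i : ι} (hv : c v = i) :
    ((G.induce {x | c x = i}).neighborSet ⟨v, hv⟩).ncard = G.partDegree c v i := by
  rw [partDegree, ← Set.ncard_image_of_injective _ Subtype.val_injective]
  congr 1
  ext w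
  constructor
  · rintro ⟨w, hvw, rfl⟩
    exact ⟨hvw, w.2⟩
  · rintro ⟨hvw, hw⟩
    exact ⟨⟨w, hw⟩, hvw, rfl⟩

end SimpleGraph

theorem min_partition_max_degree_general {V : Type*} [Fintype V] (G : SimpleGraph V)
    [DecidableRel G.Adj] (k : ℕ) (r : Fin k → ℕ)
    (hsum : G.maxDegree + 1 ≤ (∑ i, r i) + k)
    (f : (V → Fin k) → ℤ)
    (hf : ∀ c : V → Fin k, f c = ∑ i : Fin k,
      (({e : Sym2 V | e ∈ G.edgeSet ∧ ∀ v ∈ e, c v = i}.ncard : ℤ) -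
        (r i : ℤ) * ({v : V | c v = i}.ncard : ℤ)))
    (c : V → Fin k) (hmin : ∀ c' : V → Fin k, f c ≤ f c') :
    ∀ i : Fin k, ∀ v : {v : V // c v = i},
      ((G.induce {v : V | c v = i}).neighborSet v).ncard ≤ r i := by
  classical
  rintro i ⟨v, hv⟩
  rw [G.ncard_neighborSet_induce_fiber c hv]
  subst hv
  by_contra! hlt
  obtain ⟨j, hj⟩ := G.exists_partDegree_le r (by simpa using hsum) c v
  have hcost : ∀ c, f c = G.partitionCost r c := hf
  have hmove := G.partitionCost_update r c v j
  rw [← hcost, ← hcost] at hmove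
  have := hmin (Function.update c v j)
  omega

/-- If `∑ rᵢ ≥ Δ(G) + 1 - k` and the partition `c` of `V(G)` into `k` parts minimizes
`f(P) = ∑ᵢ (|E(G[Vᵢ])| - rᵢ|Vᵢ|)`, then `Δ(G[Vᵢ]) ≤ rᵢ` for every `i`. -/
theorem min_partition_max_degree {V : Type*} [Fintype V] (G : SimpleGraph V)
    [DecidableRel G.Adj] (k : ℕ) (hk : 1 ≤ k) (r : Fin k → ℕ)
    (hsum : G.maxDegree + 1 ≤ (∑ i, r i) + k)
    (f : (V → Fin k) → ℤ)
    (hf : ∀ c : V → Fin k, f c = ∑ i : Fin k,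
      (({e : Sym2 V | e ∈ G.edgeSet ∧ ∀ v ∈ e, c v = i}.ncard : ℤ) -
        (r i : ℤ) * ({v : V | c v = i}.ncard : ℤ)))
    (c : V → Fin k) (hmin : ∀ c' : V → Fin k, f c ≤ f c') :
    ∀ i : Fin k, ∀ v : {v : V // c v = i},
      ((G.induce {v : V | c v = i}).neighborSet v).ncard ≤ r i :=
  min_partition_max_degree_general G k r hsum f hf c hmin
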